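/- Let $k$ be a field of characteristic $\ne 2$ and let $\lambda_2,\dots,\lambda_{m+1} \in k^*$ be such that $\lambda_i \ne \lambda_j$ for $i\ne j$ and $\lambda_i \ne \lambda_j^{-1}$ for all $i,j$ (in particular $\lambda_i \ne \pm 1$). Then the $(m+2)\times(m+2)$ matrix whose row indexed by $j\in[0,m+1]$ is $(1, (-1)^j, \lambda_2^j+\lambda_2^{-j}, \dots, \lambda_{m+1}^j+\lambda_{m+1}^{-j})$ is invertible. -/

import Mathlib

open Polynomial Matrix

noncomputable def cheb2 (k : Type*) [Field k] : ℕ → Polynomial k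
  | 0 => 2
  | 1 => X
  | (n+2) => X * cheb2 k (n+1) - cheb2 k n

lemma cheb2_natDegree_le (k : Type*) [Field k] : ∀ n, (cheb2 k n).natDegree ≤ n
  | 0 => by simp [cheb2]
  | 1 => by simp [cheb2]
  | (n+2) => by
      rw [cheb2]
      refine le_trans (natDegree_sub_le _ _) ?_
      simp only [max_le_iff]
      constructor
      · refine le_trans (natDegree_mul_le) ?_
        have := cheb2_natDegree_le k (n+1)
        simp [natDegree_X]; omega
      · exact le_trans (cheb2_natDegree_le k n) (by omega)

lemma cheb2_coeff_self (k : Type*) [Field k] : ∀ n, (cheb2 k (n+1)).coeff (n+1) = 1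
  | 0 => by simp [cheb2]
  | (n+1) => by
      rw [cheb2, coeff_sub, coeff_X_mul, cheb2_coeff_self k n,
        coeff_eq_zero_of_natDegree_lt (lt_of_le_of_lt (cheb2_natDegree_le k n) (by omega)),
        sub_zero]

lemma cheb2_eval (k : Type*) [Field k] (μ : k) (hμ : μ ≠ 0) :
    ∀ n, (cheb2 k n).eval (μ + μ⁻¹) = μ ^ n + μ⁻¹ ^ n
  | 0 => by simp [cheb2]; norm_num
  | 1 => by simp [cheb2]
  | (n+2) => by
      rw [cheb2]
      simp only [eval_sub, eval_mul, eval_X, cheb2_eval k μ hμ (n+1), cheb2_eval k μ hμ n]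
      field_simp
      linear_combination (μ⁻¹ ^ n * (μ - μ⁻¹)) * mul_inv_cancel₀ hμ

lemma add_inv_eq_add_inv {k : Type*} [Field k] {a b : k} (ha : a ≠ 0) (hb : b ≠ 0)
    (h : a + a⁻¹ = b + b⁻¹) : a = b ∨ a = b⁻¹ := by
  have h' : (a - b) * (a * b - 1) = 0 := by
    field_simp at h
    linear_combination h
  rcases mul_eq_zero.mp h' with h'' | h''
  · exact Or.inl (sub_eq_zero.mp h'')
  · exact Or.inr (eq_inv_of_mul_eq_one_left (by linear_combination h''))

/-- let `k` be a field of characteristic `≠ 2` and let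
`λ₂,…,λ_{m+1} ∈ k*` be such that `λᵢ ≠ λⱼ` for `i ≠ j` and `λᵢ ≠ λⱼ⁻¹` for all `i,j`
(in particular `λᵢ ≠ ±1`).  Then the `(m+2) × (m+2)` matrix whose row indexed by
`j ∈ [0,m+1]` is `(1, (-1)^j, λ₂ʲ + λ₂⁻ʲ, …, λ_{m+1}ʲ + λ_{m+1}⁻ʲ)` is invertible. -/
theorem stmt3 {k : Type*} [Field k] (h2 : (2 : k) ≠ 0) (m : ℕ) (l : Fin m → k)
    (hl0 : ∀ i, l i ≠ 0)
    (hne : ∀ i j, i ≠ j → l i ≠ l j)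
    (hinv : ∀ i j, l i ≠ (l j)⁻¹) :
    IsUnit (Matrix.of fun j i : Fin (m + 2) =>
      if h : 2 ≤ (i : ℕ) then
        l ⟨(i : ℕ) - 2, by have := i.isLt; omega⟩ ^ ((j : ℕ) : ℤ) +
          l ⟨(i : ℕ) - 2, by have := i.isLt; omega⟩ ^ (-((j : ℕ) : ℤ))
      else if (i : ℕ) = 0 then 1 else (-1) ^ (j : ℕ)) := by
  classical
  -- one is not minus one
  have hone : (1 : k) ≠ -1 := fun h => h2 (by linear_combination h)
  -- the λ's are not ±1
  have hl1 : ∀ x, l x ≠ 1 := by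
    intro x hx; exact hinv x x (by rw [hx]; norm_num)
  have hlm1 : ∀ x, l x ≠ -1 := by
    intro x hx; exact hinv x x (by rw [hx]; norm_num)
  -- the μ's
  set μ : Fin (m + 2) → k := fun i =>
    if h : 2 ≤ (i : ℕ) then l ⟨(i : ℕ) - 2, by have := i.isLt; omega⟩
    else if (i : ℕ) = 0 then 1 else -1 with hμdef
  have hμbig : ∀ i : Fin (m + 2), ∀ h : 2 ≤ (i : ℕ),
      μ i = l ⟨(i : ℕ) - 2, by have := i.isLt; omega⟩ := by
    intro i h; simp only [hμdef]; rw [dif_pos h]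
  have hμzero : ∀ i : Fin (m + 2), (i : ℕ) = 0 → μ i = 1 := by
    intro i h
    simp only [hμdef]; rw [dif_neg (by omega), if_pos h]
  have hμone : ∀ i : Fin (m + 2), ¬ 2 ≤ (i : ℕ) → (i : ℕ) ≠ 0 → μ i = -1 := by
    intro i h h'
    simp only [hμdef]; rw [dif_neg h, if_neg h']
  have hμ0 : ∀ i, μ i ≠ 0 := by
    intro i
    simp only [hμdef]
    split_ifs with h h'
    · exact hl0 _
    · exact one_ne_zero
    · simp
  set c : Fin (m + 2) → k := fun i => μ i + (μ i)⁻¹ with hcdef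
  -- injectivity of c
  have hcinj : Function.Injective c := by
    intro i i' h
    have hd := add_inv_eq_add_inv (hμ0 i) (hμ0 i') h
    by_cases hi : 2 ≤ (i : ℕ) <;> by_cases hi' : 2 ≤ (i' : ℕ)
    · rw [hμbig i hi, hμbig i' hi'] at hd
      rcases hd with h' | h'
      · by_contra hii
        refine hne _ _ (fun he => hii ?_) h'
        have hvv := congrArg Fin.val he
        simp only at hvv
        exact Fin.ext (by omega)
      · exact absurd h' (hinv _ _)
    · exfalso
      rw [hμbig i hi] at hd
      by_cases hz : (i' : ℕ) = 0
      · rw [hμzero i' hz] at hd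
        rcases hd with h' | h'
        · exact hl1 _ h'
        · rw [inv_one] at h'; exact hl1 _ h'
      · rw [hμone i' hi' hz] at hd
        rcases hd with h' | h'
        · exact hlm1 _ h'
        · rw [show ((-1 : k))⁻¹ = -1 by norm_num] at h'; exact hlm1 _ h'
    · exfalso
      rw [hμbig i' hi'] at hd
      by_cases hz : (i : ℕ) = 0
      · rw [hμzero i hz] at hd
        rcases hd with h' | h'
        · exact hl1 _ h'.symm
        · exact hl1 _ (by rw [← inv_inv (l _), ← h', inv_one])
      · rw [hμone i hi hz] at hd
        rcases hd with h' | h'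
        · exact hlm1 _ h'.symm
        · exact hlm1 _ (by rw [← inv_inv (l _), ← h']; norm_num)
    · by_cases hz : (i : ℕ) = 0 <;> by_cases hz' : (i' : ℕ) = 0
      · exact Fin.ext (by omega)
      · exfalso
        rw [hμzero i hz, hμone i' hi' hz'] at hd
        rcases hd with h' | h'
        · exact hone h'
        · rw [show ((-1 : k))⁻¹ = -1 by norm_num] at h'; exact hone h'
      · exfalso
        rw [hμone i hi hz, hμzero i' hz'] at hd
        rcases hd with h' | h'
        · exact hone h'.symm
        · rw [inv_one] at h'; exact hone h'.symm
      · exact Fin.ext (by omega)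
  -- the triangular matrix of coefficients
  set L : Matrix (Fin (m + 2)) (Fin (m + 2)) k :=
    Matrix.of fun j r : Fin (m + 2) => (cheb2 k (j : ℕ)).coeff (r : ℕ) with hLdef
  set d : Fin (m + 2) → k := fun i => if 2 ≤ (i : ℕ) then 1 else 2 with hddef
  -- the key factorization
  have key : (Matrix.of fun j i : Fin (m + 2) =>
      if h : 2 ≤ (i : ℕ) then
        l ⟨(i : ℕ) - 2, by have := i.isLt; omega⟩ ^ ((j : ℕ) : ℤ) +
          l ⟨(i : ℕ) - 2, by have := i.isLt; omega⟩ ^ (-((j : ℕ) : ℤ))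
      else if (i : ℕ) = 0 then 1 else (-1) ^ (j : ℕ)) * Matrix.diagonal d
      = L * (Matrix.vandermonde c)ᵀ := by
    ext j i
    rw [Matrix.mul_diagonal]
    have hRHS : (L * (Matrix.vandermonde c)ᵀ) j i = (cheb2 k (j : ℕ)).eval (c i) := by
      rw [Matrix.mul_apply]
      rw [Polynomial.eval_eq_sum_range' (n := m + 2)
        (lt_of_le_of_lt (cheb2_natDegree_le k (j : ℕ)) (by have := j.isLt; omega)) (c i)]
      rw [← Fin.sum_univ_eq_sum_range (fun r => (cheb2 k (j : ℕ)).coeff r * c i ^ r) (m + 2)]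
      rfl
    rw [hRHS, show c i = μ i + (μ i)⁻¹ from rfl,
      cheb2_eval k (μ i) (hμ0 i) (j : ℕ)]
    by_cases hi : 2 ≤ (i : ℕ)
    · rw [hμbig i hi, Matrix.of_apply, dif_pos hi, show d i = 1 from if_pos hi, mul_one]
      simp only [_root_.zpow_neg, zpow_natCast, inv_pow]
    · have hd2 : d i = 2 := if_neg hi
      by_cases hz : (i : ℕ) = 0
      · rw [hμzero i hz, Matrix.of_apply, dif_neg hi, if_pos hz, hd2]
        norm_num
      · rw [hμone i hi hz, Matrix.of_apply, dif_neg hi, if_neg hz, hd2]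
        rw [show ((-1 : k))⁻¹ = -1 by norm_num]
        ring
  -- determinants
  have hdL : L.det = 2 := by
    rw [Matrix.det_of_lowerTriangular L (by
      intro a b hab
      simp only [hLdef, Matrix.of_apply]
      exact coeff_eq_zero_of_natDegree_lt
        (lt_of_le_of_lt (cheb2_natDegree_le k (a : ℕ)) hab))]
    rw [Fin.prod_univ_succ]
    have h0 : ((0 : Fin (m + 2)) : ℕ) = 0 := rfl
    simp only [hLdef, Matrix.of_apply, h0]
    have : ∀ i : Fin (m + 1), (cheb2 k ((i.succ : Fin (m+2)) : ℕ)).coeff ((i.succ : Fin (m+2)) : ℕ) = 1 := by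
      intro i
      have : ((i.succ : Fin (m+2)) : ℕ) = (i : ℕ) + 1 := rfl
      rw [this, cheb2_coeff_self]
    rw [Finset.prod_congr rfl (fun i _ => this i)]
    simp [cheb2]
  have hdD : (Matrix.diagonal d).det ≠ 0 := by
    rw [Matrix.det_diagonal]
    apply Finset.prod_ne_zero_iff.mpr
    intro i _
    simp only [hddef]
    split_ifs
    · exact one_ne_zero
    · exact h2
  have hdV : (Matrix.vandermonde c).det ≠ 0 :=
    Matrix.det_vandermonde_ne_zero_iff.mpr hcinj
  have hdet := congrArg Matrix.det key
  rw [Matrix.det_mul, Matrix.det_mul, Matrix.det_transpose, hdL] at hdet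
  rw [Matrix.isUnit_iff_isUnit_det, isUnit_iff_ne_zero]
  intro hc0
  rw [hc0, zero_mul] at hdet
  exact mul_ne_zero h2 hdV hdet.symm
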